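/- Under assumptions (H.2) and (H.5), for every polynomial function f of degree at most 2q with q ≤ 2κ, there exists a nonnegative polynomial function g of degree at most 2q such that for all n ∈ ℕ and all x ∈ ℝ, |E_x[f(Y_n)]| ≤ g(x). -/

import Mathlib

/-!
For `p = 4κ`, Minkowski's inequality and the independence of `(A_{n+1}, B_{n+1})` from `Y_n`
give `‖Y_{n+1}‖_p ≤ ‖A_1‖_p + ‖B_1‖_p ‖Y_n‖_p`. Conditioning on `ζ`, which is independent of
the noise, turns (H.5) into `E|B_1|^p < 1`, so the recursion yields the uniform bound
`‖Y_n‖_p ≤ |x| + K` with `K = ‖A_1‖_p / (1 - ‖B_1‖_p)`, finite by (H.2). By Lyapunov's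
inequality `E|Y_n|^{2q} ≤ (|x| + K)^{2q} ≤ 2^{2q-1} (x^{2q} + K^{2q})`, and every monomial
`y^k` of `f` is dominated by `1 + |y|^{2q}`.
-/

open MeasureTheory ProbabilityTheory Filter

noncomputable section

/-- the induced Markov chain started at `x`: `Y_0 = x`, `Y_{n+1} = A_{n+1} + B_{n+1} Y_n` -/
def Ychain {Ω : Type} (A B : ℕ → Ω → ℝ) (x : ℝ) : ℕ → Ω → ℝ
  | 0 => fun _ => x
  | n+1 => fun ω => A (n+1) ω + B (n+1) ω * Ychain A B x n ω

/-- the stationary value `Y_∞ = Σ_{ℓ≥1} B_1⋯B_{ℓ-1} A_ℓ` -/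
def Yinf {Ω : Type} (A B : ℕ → Ω → ℝ) (ω : Ω) : ℝ :=
  ∑' ℓ : ℕ, (∏ j ∈ Finset.Icc 1 ℓ, B j ω) * A (ℓ+1) ω

/-- the `L^s`-norm `‖Z‖_s = (E[|Z|^s])^{1/s}` -/
def momNorm {Ω : Type} [MeasurableSpace Ω] (P : Measure Ω) (s : ℕ) (Z : Ω → ℝ) : ℝ :=
  (∫ ω, |Z ω|^s ∂P) ^ ((s:ℝ)⁻¹)

variable {Ω : Type} [MeasurableSpace Ω] {P : Measure Ω}

open scoped ENNReal

lemma ENNReal.le_add_mul_inv_of_le_add_mul {y : ℕ → ℝ≥0∞} {α ρ : ℝ≥0∞} (hρ : ρ < 1)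
    (hy : ∀ n, y (n + 1) ≤ α + ρ * y n) : ∀ n, y n ≤ y 0 + α * (1 - ρ)⁻¹ := by
  set K := α * (1 - ρ)⁻¹
  have hK : α + ρ * K = K := by
    have hα : K * (1 - ρ) = α := by
      rw [mul_assoc, ENNReal.inv_mul_cancel (tsub_pos_of_lt hρ).ne'
        (ENNReal.sub_ne_top ENNReal.one_ne_top), mul_one]
    calc α + ρ * K = K * (1 - ρ) + K * ρ := by rw [hα, mul_comm]
      _ = K := by rw [← mul_add, tsub_add_cancel_of_le hρ.le, mul_one]
  intro n
  induction n with
  | zero => exact le_self_add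
  | succ n ih =>
    calc y (n + 1) ≤ α + ρ * (y 0 + K) := (hy n).trans (by gcongr)
      _ = ρ * y 0 + (α + ρ * K) := by ring
      _ ≤ y 0 + K := by rw [hK]; gcongr; exact mul_le_of_le_one_left' hρ.le

lemma eLpNorm_mul_of_indepFun {X Y : Ω → ℝ} (hX : Measurable X) (hY : Measurable Y)
    (hXY : IndepFun X Y P) {p : ℝ≥0∞} (hp0 : p ≠ 0) (hp : p ≠ ∞) :
    eLpNorm (X * Y) p P = eLpNorm X p P * eLpNorm Y p P := by
  have hφ : Measurable fun t : ℝ => ‖t‖ₑ ^ p.toReal := by fun_prop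
  simp only [eLpNorm_eq_lintegral_rpow_enorm_toReal hp0 hp, Pi.mul_apply, enorm_mul,
    ENNReal.mul_rpow_of_nonneg _ _ ENNReal.toReal_nonneg]
  have h := lintegral_mul_eq_lintegral_mul_lintegral_of_indepFun (hφ.comp hX) (hφ.comp hY)
    (hXY.comp hφ hφ)
  simp only [Pi.mul_apply, Function.comp_apply] at h
  rw [h, ENNReal.mul_rpow_of_nonneg _ _ (by positivity)]

lemma measurable_Ychain_iSup_comap {Ω : Type} {A B : ℕ → Ω → ℝ} (x : ℝ) : ∀ n,
    Measurable[⨆ i ∈ Set.Iic n, MeasurableSpace.comap (fun ω => (A i ω, B i ω)) inferInstance]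
      (Ychain A B x n)
  | 0 => measurable_const
  | n + 1 => by
    set m := fun i => MeasurableSpace.comap (fun ω => (A i ω, B i ω)) inferInstance
    have hpair : Measurable[⨆ i ∈ Set.Iic (n + 1), m i] fun ω => (A (n + 1) ω, B (n + 1) ω) :=
      (comap_measurable _).mono (le_iSup₂ (f := fun i (_ : i ∈ Set.Iic (n + 1)) => m i) (n + 1)
        (Set.mem_Iic.2 le_rfl)) le_rfl
    have hY : Measurable[⨆ i ∈ Set.Iic (n + 1), m i] (Ychain A B x n) :=
      (measurable_Ychain_iSup_comap x n).mono
        (biSup_mono fun i hi => Set.Iic_subset_Iic.2 n.le_succ hi) le_rfl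
    exact hpair.fst.add (hpair.snd.mul hY)

section Chain

variable {A B : ℕ → Ω → ℝ}

lemma measurable_Ychain (hA : ∀ n, Measurable (A n)) (hB : ∀ n, Measurable (B n)) (x : ℝ) :
    ∀ n, Measurable (Ychain A B x n)
  | 0 => measurable_const
  | n + 1 => (hA (n + 1)).add ((hB (n + 1)).mul (measurable_Ychain hA hB x n))

lemma indepFun_pair_Ychain (hA : ∀ n, Measurable (A n)) (hB : ∀ n, Measurable (B n))
    (hiid : iIndepFun (fun n ω => (A n ω, B n ω)) P) (x : ℝ) (n : ℕ) :
    IndepFun (fun ω => (A (n + 1) ω, B (n + 1) ω)) (Ychain A B x n) P := by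
  have hle : ∀ i, MeasurableSpace.comap (fun ω => (A i ω, B i ω)) inferInstance ≤ ‹_› :=
    fun i => ((hA i).prodMk (hB i)).comap_le
  have hindep := indep_iSup_of_disjoint hle ((iIndepFun_iff_iIndep _ _ _).1 hiid)
    (S := {n + 1}) (T := Set.Iic n) (by simp)
  rw [IndepFun_iff_Indep]
  refine indep_of_indep_of_le_right (indep_of_indep_of_le_left hindep ?_)
    (measurable_Ychain_iSup_comap x n).comap_le
  exact le_iSup₂ (f := fun i (_ : i ∈ ({n + 1} : Set ℕ)) =>
    MeasurableSpace.comap (fun ω => (A i ω, B i ω)) inferInstance) (n + 1) rfl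

lemma eLpNorm_Ychain_le [IsProbabilityMeasure P]
    (hA : ∀ n, Measurable (A n)) (hB : ∀ n, Measurable (B n))
    (hiid : iIndepFun (fun n ω => (A n ω, B n ω)) P)
    (hident : ∀ n, 1 ≤ n → IdentDistrib (fun ω => (A n ω, B n ω)) (fun ω => (A 1 ω, B 1 ω)) P P)
    {p : ℝ≥0∞} (hp : 1 ≤ p) (hp_top : p ≠ ∞) (hρ : eLpNorm (B 1) p P < 1) (x : ℝ) (n : ℕ) :
    eLpNorm (Ychain A B x n) p P ≤ ‖x‖ₑ + eLpNorm (A 1) p P * (1 - eLpNorm (B 1) p P)⁻¹ := by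
  have hp0 : p ≠ 0 := (zero_lt_one.trans_le hp).ne'
  have hstart : eLpNorm (Ychain A B x 0) p P = ‖x‖ₑ := by
    simp [Ychain, eLpNorm_const x hp0 (IsProbabilityMeasure.ne_zero P)]
  rw [← hstart]
  refine ENNReal.le_add_mul_inv_of_le_add_mul (y := fun n => eLpNorm (Ychain A B x n) p P) hρ
    (fun n => ?_) n
  have hYn := measurable_Ychain hA hB x n
  have hlaw := hident (n + 1) n.succ_pos
  have hAn : eLpNorm (A (n + 1)) p P = eLpNorm (A 1) p P := (hlaw.comp measurable_fst).eLpNorm_eq p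
  have hBn : eLpNorm (B (n + 1)) p P = eLpNorm (B 1) p P := (hlaw.comp measurable_snd).eLpNorm_eq p
  have hindep : IndepFun (B (n + 1)) (Ychain A B x n) P :=
    (indepFun_pair_Ychain hA hB hiid x n).comp measurable_snd measurable_id
  calc eLpNorm (Ychain A B x (n + 1)) p P
      = eLpNorm (A (n + 1) + B (n + 1) * Ychain A B x n) p P := rfl
    _ ≤ eLpNorm (A (n + 1)) p P + eLpNorm (B (n + 1) * Ychain A B x n) p P :=
      eLpNorm_add_le (hA _).aestronglyMeasurable ((hB _).mul hYn).aestronglyMeasurable hp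
    _ = eLpNorm (A 1) p P + eLpNorm (B 1) p P * eLpNorm (Ychain A B x n) p P := by
      rw [eLpNorm_mul_of_indepFun (hB _) hYn hindep hp0 hp_top, hAn, hBn]

end Chain

lemma integral_abs_pow_le_of_eLpNorm_le [IsProbabilityMeasure P] {Y : Ω → ℝ}
    (hY : AEStronglyMeasurable Y P) (s : ℕ) {M : ℝ≥0∞} (hM : M ≠ ∞) (h : eLpNorm Y s P ≤ M) :
    Integrable (fun ω => |Y ω| ^ s) P ∧ ∫ ω, |Y ω| ^ s ∂P ≤ M.toReal ^ s := by
  have hmem : MemLp Y s P := ⟨hY, h.trans_lt hM.lt_top⟩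
  refine ⟨by simpa using hmem.integrable_norm_pow', ?_⟩
  rcases eq_or_ne s 0 with rfl | hs
  · simp
  have hlp := lpNorm_eq_integral_norm_rpow_toReal (p := s) (by simpa) (by simp) hY
  simp only [ENNReal.toReal_natCast, Real.rpow_natCast, Real.norm_eq_abs] at hlp
  calc ∫ ω, |Y ω| ^ s ∂P = lpNorm Y s P ^ s := by
        rw [hlp, Real.rpow_inv_natCast_pow (integral_nonneg fun ω => by positivity) hs]
    _ ≤ M.toReal ^ s := by
        refine pow_le_pow_left₀ lpNorm_nonneg ?_ s
        rw [← toReal_eLpNorm hY]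
        exact ENNReal.toReal_mono hM h

lemma memLp_of_integrable_abs_pow {f : Ω → ℝ} (hf : AEStronglyMeasurable f P) {s : ℕ}
    (hs : s ≠ 0) (h : Integrable (fun ω => |f ω| ^ s) P) : MemLp f s P :=
  (integrable_norm_rpow_iff hf (by simpa) (by simp)).1 (by simpa using h)

lemma lintegral_enorm_pow_eq_ofReal_integral [IsFiniteMeasure P] {u : Ω → ℝ} {s : ℕ} (hs : Even s)
    (hu : MemLp u s P) : ∫⁻ ω, ‖u ω‖ₑ ^ s ∂P = ENNReal.ofReal (∫ ω, u ω ^ s ∂P) := by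
  have hint : Integrable (fun ω => u ω ^ s) P := by
    simpa [hs.pow_abs] using hu.integrable_norm_pow'
  rw [ofReal_integral_eq_lintegral_ofReal hint (ae_of_all _ fun ω => hs.pow_nonneg _)]
  congr with ω
  rw [Real.enorm_eq_ofReal_abs, ← ENNReal.ofReal_pow (abs_nonneg _), hs.pow_abs]

section PolynomialBound

open Polynomial

lemma pow_le_one_add_pow {t : ℝ} (ht : 0 ≤ t) {k s : ℕ} (hks : k ≤ s) : t ^ k ≤ 1 + t ^ s := by
  rcases le_total t 1 with h | h
  · linarith [pow_le_one₀ ht h (n := k), pow_nonneg ht s]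
  · linarith [pow_le_pow_right₀ h hks]

lemma abs_eval_le_sum_abs_coeff_mul (f : ℝ[X]) {s : ℕ} (hf : f.natDegree ≤ s) (y : ℝ) :
    |f.eval y| ≤ (∑ k ∈ Finset.range (f.natDegree + 1), |f.coeff k|) * (1 + |y| ^ s) := by
  rw [eval_eq_sum_range, Finset.sum_mul]
  refine (Finset.abs_sum_le_sum_abs _ _).trans (Finset.sum_le_sum fun k hk => ?_)
  rw [abs_mul, abs_pow]
  gcongr
  exact pow_le_one_add_pow (abs_nonneg y) ((Finset.mem_range_succ_iff.1 hk).trans hf)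

lemma abs_integral_eval_le [IsProbabilityMeasure P] (f : ℝ[X]) {s : ℕ} (hf : f.natDegree ≤ s)
    {Y : Ω → ℝ} (hY : Integrable (fun ω => |Y ω| ^ s) P) :
    |∫ ω, f.eval (Y ω) ∂P|
      ≤ (∑ k ∈ Finset.range (f.natDegree + 1), |f.coeff k|) * (1 + ∫ ω, |Y ω| ^ s ∂P) := by
  calc |∫ ω, f.eval (Y ω) ∂P| = ‖∫ ω, f.eval (Y ω) ∂P‖ := (Real.norm_eq_abs _).symm
    _ ≤ ∫ ω, (∑ k ∈ Finset.range (f.natDegree + 1), |f.coeff k|) * (1 + |Y ω| ^ s) ∂P :=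
        norm_integral_le_of_norm_le (((integrable_const 1).fun_add hY).const_mul _)
          (ae_of_all _ fun ω => (Real.norm_eq_abs _).trans_le
            (abs_eval_le_sum_abs_coeff_mul f hf (Y ω)))
    _ = _ := by
        rw [integral_const_mul, integral_add (integrable_const 1) hY, integral_const]
        simp

theorem exists_polynomial_bound_Ychain [IsProbabilityMeasure P] {A B : ℕ → Ω → ℝ}
    (hA : ∀ n, Measurable (A n)) (hB : ∀ n, Measurable (B n))
    (hiid : iIndepFun (fun n ω => (A n ω, B n ω)) P)
    (hident : ∀ n, 1 ≤ n → IdentDistrib (fun ω => (A n ω, B n ω)) (fun ω => (A 1 ω, B 1 ω)) P P)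
    {p : ℝ≥0∞} (hp : 1 ≤ p) (hp_top : p ≠ ∞) (hA_mem : MemLp (A 1) p P)
    (hρ : eLpNorm (B 1) p P < 1) {q : ℕ} (hqp : ((2 * q : ℕ) : ℝ≥0∞) ≤ p)
    (f : ℝ[X]) (hf : f.natDegree ≤ 2 * q) :
    ∃ g : ℝ[X], g.natDegree ≤ 2 * q ∧ (∀ x, 0 ≤ g.eval x) ∧
      ∀ n x, |∫ ω, f.eval (Ychain A B x n ω) ∂P| ≤ g.eval x := by
  set S := ∑ k ∈ Finset.range (f.natDegree + 1), |f.coeff k|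
  set Kₑ := eLpNorm (A 1) p P * (1 - eLpNorm (B 1) p P)⁻¹
  have hK_top : Kₑ ≠ ∞ :=
    ENNReal.mul_ne_top hA_mem.eLpNorm_ne_top (ENNReal.inv_ne_top.2 (tsub_pos_of_lt hρ).ne')
  set K := Kₑ.toReal
  have hmoment : ∀ n x, Integrable (fun ω => |Ychain A B x n ω| ^ (2 * q)) P ∧
      ∫ ω, |Ychain A B x n ω| ^ (2 * q) ∂P ≤ (|x| + K) ^ (2 * q) := by
    intro n x
    have hYn : AEStronglyMeasurable (Ychain A B x n) P :=
      (measurable_Ychain hA hB x n).aestronglyMeasurable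
    have h := integral_abs_pow_le_of_eLpNorm_le hYn (2 * q) (by finiteness)
      ((eLpNorm_le_eLpNorm_of_exponent_le hqp hYn).trans
        (eLpNorm_Ychain_le hA hB hiid hident hp hp_top hρ x n))
    rwa [ENNReal.toReal_add (by simp) hK_top, toReal_enorm, Real.norm_eq_abs] at h
  refine ⟨C S * (1 + C (2 ^ (2 * q - 1)) * (X ^ (2 * q) + C (K ^ (2 * q)))), ?_, fun x => ?_,
    fun n x => ?_⟩
  · compute_degree
  · simp only [eval_mul, eval_C, eval_add, eval_one, eval_pow, eval_X]
    have hx : 0 ≤ x ^ (2 * q) := (even_two_mul q).pow_nonneg x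
    positivity
  obtain ⟨hint, hle⟩ := hmoment n x
  calc |∫ ω, f.eval (Ychain A B x n ω) ∂P|
      ≤ S * (1 + ∫ ω, |Ychain A B x n ω| ^ (2 * q) ∂P) := abs_integral_eval_le f hf hint
    _ ≤ S * (1 + 2 ^ (2 * q - 1) * (|x| ^ (2 * q) + K ^ (2 * q))) := by
        gcongr
        exact hle.trans (add_pow_le (abs_nonneg x) ENNReal.toReal_nonneg _)
    _ = _ := by simp [(even_two_mul q).pow_abs]

end PolynomialBound

section Mixture

variable {α : Type*} [MeasurableSpace α] {ζ : Ω → α}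

lemma MemLp.ite [DecidableEq α] [MeasurableSingletonClass α] {E : Type*} [NormedAddCommGroup E]
    {u v : Ω → E} {p : ℝ≥0∞} (hζ : Measurable ζ) (z : α) (hu : MemLp u p P) (hv : MemLp v p P) :
    MemLp (fun ω => if ζ ω = z then u ω else v ω) p P := by
  exact MemLp.piecewise (s := {ω | ζ ω = z}) (hζ (measurableSet_singleton z)) (hu.restrict _)
    (hv.restrict _)

lemma lintegral_indicator_comp_mul_of_indepFun {β : Type*} [MeasurableSpace β] {u : Ω → β}
    (hζ : Measurable ζ) (hu : Measurable u) (hζu : IndepFun ζ u P) {t : Set α}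
    (ht : MeasurableSet t) {φ : β → ℝ≥0∞} (hφ : Measurable φ) :
    ∫⁻ ω, t.indicator 1 (ζ ω) * φ (u ω) ∂P = P (ζ ⁻¹' t) * ∫⁻ ω, φ (u ω) ∂P := by
  have hχ : Measurable (t.indicator (1 : α → ℝ≥0∞)) := measurable_one.indicator ht
  have h := lintegral_mul_eq_lintegral_mul_lintegral_of_indepFun (hχ.comp hζ) (hφ.comp hu)
    (hζu.comp hχ hφ)
  simp only [Pi.mul_apply, Function.comp_apply] at h
  rw [h, ← lintegral_indicator_one (hζ ht)]
  rfl

lemma lintegral_ite_of_indepFun [IsProbabilityMeasure P] [DecidableEq α]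
    [MeasurableSingletonClass α] {β : Type*} [MeasurableSpace β] {u v : Ω → β}
    (hζ : Measurable ζ) (hu : Measurable u) (hv : Measurable v) (hζu : IndepFun ζ u P)
    (hζv : IndepFun ζ v P) (z : α) {φ : β → ℝ≥0∞} (hφ : Measurable φ) :
    ∫⁻ ω, φ (if ζ ω = z then u ω else v ω) ∂P
      = P {ω | ζ ω = z} * ∫⁻ ω, φ (u ω) ∂P + (1 - P {ω | ζ ω = z}) * ∫⁻ ω, φ (v ω) ∂P := by
  have hz : MeasurableSet ({z} : Set α) := measurableSet_singleton z
  have hsplit : ∀ ω, φ (if ζ ω = z then u ω else v ω)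
      = ({z} : Set α).indicator 1 (ζ ω) * φ (u ω) + ({z}ᶜ : Set α).indicator 1 (ζ ω) * φ (v ω) := by
    intro ω
    by_cases h : ζ ω = z <;> simp [h]
  have hmeas : Measurable fun ω => ({z} : Set α).indicator (1 : α → ℝ≥0∞) (ζ ω) * φ (u ω) :=
    ((measurable_one.indicator hz).comp hζ).mul (hφ.comp hu)
  simp_rw [hsplit]
  rw [lintegral_add_left hmeas, lintegral_indicator_comp_mul_of_indepFun hζ hu hζu hz hφ,
    lintegral_indicator_comp_mul_of_indepFun hζ hv hζv hz.compl hφ, Set.preimage_compl,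
    prob_compl_eq_one_sub (hζ hz)]
  rfl

lemma eLpNorm_ite_lt_one [IsProbabilityMeasure P] [DecidableEq α] [MeasurableSingletonClass α]
    {u v : Ω → ℝ} (hζ : Measurable ζ) (hu : Measurable u) (hv : Measurable v)
    (hζu : IndepFun ζ u P) (hζv : IndepFun ζ v P) (z : α) {s : ℕ} (hs : Even s) (hs0 : s ≠ 0)
    (hu_mem : MemLp u s P) (hv_mem : MemLp v s P)
    (h : P.real {ω | ζ ω = z} * ∫ ω, u ω ^ s ∂P
      + (1 - P.real {ω | ζ ω = z}) * ∫ ω, v ω ^ s ∂P < 1) :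
    eLpNorm (fun ω => if ζ ω = z then u ω else v ω) s P < 1 := by
  rw [eLpNorm_eq_lintegral_rpow_enorm_toReal (by simpa) (by simp)]
  refine ENNReal.rpow_lt_one ?_ (by simp [Nat.pos_of_ne_zero hs0])
  simp only [ENNReal.toReal_natCast, ENNReal.rpow_natCast]
  rw [lintegral_ite_of_indepFun hζ hu hv hζu hζv z (φ := fun t => ‖t‖ₑ ^ s) (by fun_prop),
    lintegral_enorm_pow_eq_ofReal_integral hs hu_mem,
    lintegral_enorm_pow_eq_ofReal_integral hs hv_mem]
  have hu_nn : 0 ≤ ∫ ω, u ω ^ s ∂P := integral_nonneg fun ω => hs.pow_nonneg _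
  have hv_nn : 0 ≤ ∫ ω, v ω ^ s ∂P := integral_nonneg fun ω => hs.pow_nonneg _
  have hw : 0 ≤ 1 - P.real {ω | ζ ω = z} := sub_nonneg.2 measureReal_le_one
  rw [← ofReal_measureReal, ← ENNReal.ofReal_one, ← ENNReal.ofReal_sub _ measureReal_nonneg,
    ← ENNReal.ofReal_mul measureReal_nonneg, ← ENNReal.ofReal_mul hw,
    ← ENNReal.ofReal_add (by positivity) (by positivity)]
  exact (ENNReal.ofReal_lt_ofReal_iff zero_lt_one).2 h

end Mixture

theorem inducedChain_domination_general
    [IsProbabilityMeasure P]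
    (eps2 eta2 eps3 eta3 : Ω → ℝ) (a b c d p0 p1 p01 : ℝ) (gam kap : ℕ)
    (A B : ℕ → Ω → ℝ) (zeta : Ω → ℝ)
    (hmeps2 : Measurable eps2) (hmeta2 : Measurable eta2)
    (hmeps3 : Measurable eps3) (hmeta3 : Measurable eta3)
    (hmA : ∀ n, Measurable (A n)) (hmB : ∀ n, Measurable (B n)) (hmzeta : Measurable zeta)
    -- (H.2)
    (hmom : ∀ s : ℕ, s ≤ 4*gam →
      Integrable (fun ω => |eps2 ω|^s) P ∧ Integrable (fun ω => |eta2 ω|^s) P ∧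
      Integrable (fun ω => |eps3 ω|^s) P ∧ Integrable (fun ω => |eta3 ω|^s) P)
    (hp : 0 ≤ p0 ∧ 0 ≤ p1 ∧ 0 ≤ p01 ∧ p0 + p1 + p01 ≤ 1 ∧ 0 < 2*p01 + p0 + p1)
    -- (H.5)
    (hkap : 1 ≤ kap ∧ kap ≤ gam)
    (h5 : ((p0+p01)/(2*p01+p0+p1)) * ∫ ω, (b + eta2 ω)^(4*kap) ∂P
        + ((p1+p01)/(2*p01+p0+p1)) * ∫ ω, (d + eta3 ω)^(4*kap) ∂P < 1)
    -- the sequence (A_n, B_n) is i.i.d. with the distribution of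
    -- (a_{2+ζ} + ε_{2+ζ}, b_{2+ζ} + η_{2+ζ}), ζ Bernoulli((p01+p1)/m) independent of the noise
    (hzetalaw : P {ω | zeta ω = 1} = ENNReal.ofReal ((p01+p1)/(2*p01+p0+p1)))
    (hzetaindep : IndepFun zeta (fun ω => (eps2 ω, eta2 ω, eps3 ω, eta3 ω)) P)
    (hiid : iIndepFun (fun n ω => (A n ω, B n ω)) P)
    (hident : ∀ n, 1 ≤ n →
      IdentDistrib (fun ω => (A n ω, B n ω)) (fun ω => (A 1 ω, B 1 ω)) P P)
    (hlaw : IdentDistrib (fun ω => (A 1 ω, B 1 ω))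
      (fun ω => if zeta ω = 1 then (c + eps3 ω, d + eta3 ω) else (a + eps2 ω, b + eta2 ω)) P P)
    :
    ∀ q : ℕ, q ≤ 2*kap → ∀ f : Polynomial ℝ, f.natDegree ≤ 2*q →
      ∃ g : Polynomial ℝ, g.natDegree ≤ 2*q ∧ (∀ x : ℝ, 0 ≤ g.eval x) ∧
        ∀ (n : ℕ) (x : ℝ), |∫ ω, f.eval (Ychain A B x n ω) ∂P| ≤ g.eval x := by
  intro q hq f hf
  obtain ⟨hp0, hp1, hp01, -, hm⟩ := hp
  obtain ⟨hε2, hη2, hε3, hη3⟩ := hmom (4 * kap) (by omega)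
  have hs : Even (4 * kap) := ⟨2 * kap, by ring⟩
  have hs0 : 4 * kap ≠ 0 := by omega
  have hmem : ∀ (co : ℝ) {e : Ω → ℝ}, Measurable e → Integrable (fun ω => |e ω| ^ (4 * kap)) P →
      MemLp (fun ω => co + e ω) (4 * kap : ℕ) P := fun co _ he h =>
    (memLp_const co).add (memLp_of_integrable_abs_pow he.aestronglyMeasurable hs0 h)
  have hAlaw : IdentDistrib (A 1)
      (fun ω => if zeta ω = 1 then c + eps3 ω else a + eps2 ω) P P := by
    simpa only [Function.comp_def, apply_ite] using hlaw.comp measurable_fst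
  have hBlaw : IdentDistrib (B 1)
      (fun ω => if zeta ω = 1 then d + eta3 ω else b + eta2 ω) P P := by
    simpa only [Function.comp_def, apply_ite] using hlaw.comp measurable_snd
  have hw : P.real {ω | zeta ω = 1} = (p01 + p1) / (2 * p01 + p0 + p1) := by
    rw [measureReal_def, hzetalaw, ENNReal.toReal_ofReal (by positivity)]
  have hw0 : 1 - (p01 + p1) / (2 * p01 + p0 + p1) = (p0 + p01) / (2 * p01 + p0 + p1) := by
    rw [eq_div_iff hm.ne', sub_mul, div_mul_cancel₀ _ hm.ne']
    ring
  have hind3 : IndepFun zeta (fun ω => d + eta3 ω) P :=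
    hzetaindep.comp measurable_id (measurable_const.add measurable_snd.snd.snd)
  have hind2 : IndepFun zeta (fun ω => b + eta2 ω) P :=
    hzetaindep.comp measurable_id (measurable_const.add measurable_snd.fst)
  have hB : eLpNorm (B 1) (4 * kap : ℕ) P < 1 := by
    rw [hBlaw.eLpNorm_eq]
    refine eLpNorm_ite_lt_one hmzeta (by fun_prop) (by fun_prop) hind3 hind2 1 hs hs0
      (hmem d hmeta3 hη3) (hmem b hmeta2 hη2) ?_
    calc _ = (p0 + p01) / (2 * p01 + p0 + p1) * ∫ ω, (b + eta2 ω) ^ (4 * kap) ∂P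
          + (p1 + p01) / (2 * p01 + p0 + p1) * ∫ ω, (d + eta3 ω) ^ (4 * kap) ∂P := by
          rw [hw, hw0]; ring
      _ < 1 := h5
  have hA : MemLp (A 1) (4 * kap : ℕ) P :=
    hAlaw.memLp_iff.2 (MemLp.ite hmzeta 1 (hmem c hmeps3 hε3) (hmem a hmeps2 hε2))
  exact exists_polynomial_bound_Ychain hmA hmB hiid hident (by norm_cast; omega)
    (ENNReal.natCast_ne_top _) hA hB (by norm_cast; omega) f hf

/-- **Lemma 4.5 of the paper (domination).** Under (H.2) and (H.5), for any polynomial `f`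
of degree at most `2q` with `q ≤ 2κ` there is a nonnegative polynomial `g` of degree at
most `2q` such that `|E_x[f(Y_n)]| ≤ g(x)` for all `n` and `x`. -/
theorem inducedChain_domination
    [IsProbabilityMeasure P]
    (eps2 eta2 eps3 eta3 : Ω → ℝ) (a b c d p0 p1 p01 : ℝ) (gam kap : ℕ)
    (A B : ℕ → Ω → ℝ) (zeta : Ω → ℝ)
    (hmeps2 : Measurable eps2) (hmeta2 : Measurable eta2)
    (hmeps3 : Measurable eps3) (hmeta3 : Measurable eta3)
    (hmA : ∀ n, Measurable (A n)) (hmB : ∀ n, Measurable (B n)) (hmzeta : Measurable zeta)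
    -- (H.2)
    (hgam : 1 ≤ gam)
    (hmom : ∀ s : ℕ, s ≤ 4*gam →
      Integrable (fun ω => |eps2 ω|^s) P ∧ Integrable (fun ω => |eta2 ω|^s) P ∧
      Integrable (fun ω => |eps3 ω|^s) P ∧ Integrable (fun ω => |eta3 ω|^s) P)
    (hmean : (∫ ω, eps2 ω ∂P = 0) ∧ (∫ ω, eps3 ω ∂P = 0) ∧
      (∫ ω, eta2 ω ∂P = 0) ∧ (∫ ω, eta3 ω ∂P = 0))
    (sige sigeta : ℝ)
    (hsige : (∫ ω, (eps2 ω)^2 ∂P = sige) ∧ (∫ ω, (eps3 ω)^2 ∂P = sige) ∧ 0 < sige)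
    (hsigeta : (∫ ω, (eta2 ω)^2 ∂P = sigeta) ∧ (∫ ω, (eta3 ω)^2 ∂P = sigeta) ∧ 0 < sigeta)
    (hp : 0 ≤ p0 ∧ 0 ≤ p1 ∧ 0 ≤ p01 ∧ p0 + p1 + p01 ≤ 1 ∧ 0 < 2*p01 + p0 + p1)
    -- (H.5)
    (hkap : 1 ≤ kap ∧ kap ≤ gam)
    (h5 : ((p0+p01)/(2*p01+p0+p1)) * ∫ ω, (b + eta2 ω)^(4*kap) ∂P
        + ((p1+p01)/(2*p01+p0+p1)) * ∫ ω, (d + eta3 ω)^(4*kap) ∂P < 1)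
    -- the sequence (A_n, B_n) is i.i.d. with the distribution of
    -- (a_{2+ζ} + ε_{2+ζ}, b_{2+ζ} + η_{2+ζ}), ζ Bernoulli((p01+p1)/m) independent of the noise
    (hzeta01 : ∀ ω, zeta ω = 0 ∨ zeta ω = 1)
    (hzetalaw : P {ω | zeta ω = 1} = ENNReal.ofReal ((p01+p1)/(2*p01+p0+p1)))
    (hzetaindep : IndepFun zeta (fun ω => (eps2 ω, eta2 ω, eps3 ω, eta3 ω)) P)
    (hiid : iIndepFun (fun n ω => (A n ω, B n ω)) P)
    (hident : ∀ n, 1 ≤ n →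
      IdentDistrib (fun ω => (A n ω, B n ω)) (fun ω => (A 1 ω, B 1 ω)) P P)
    (hlaw : IdentDistrib (fun ω => (A 1 ω, B 1 ω))
      (fun ω => if zeta ω = 1 then (c + eps3 ω, d + eta3 ω) else (a + eps2 ω, b + eta2 ω)) P P)
    :
    ∀ q : ℕ, q ≤ 2*kap → ∀ f : Polynomial ℝ, f.natDegree ≤ 2*q →
      ∃ g : Polynomial ℝ, g.natDegree ≤ 2*q ∧ (∀ x : ℝ, 0 ≤ g.eval x) ∧
        ∀ (n : ℕ) (x : ℝ), |∫ ω, f.eval (Ychain A B x n ω) ∂P| ≤ g.eval x :=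
  inducedChain_domination_general eps2 eta2 eps3 eta3 a b c d p0 p1 p01 gam kap A B zeta hmeps2
    hmeta2 hmeps3 hmeta3 hmA hmB hmzeta hmom hp hkap h5 hzetalaw hzetaindep hiid hident hlaw
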